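/- arXiv:2603.06498 — 5 statements merged into one kernel-verified Lean document; each statement's English description precedes it below -/
import Mathlib

section
/- If f = u + iv is α-massive holomorphic on an open connected set Ω ⊆ ℂ (i.e. ∂̄f = (1/2)α·conj(f) where α = 2∂̄V for a smooth real potential V), then the real part u satisfies Δu = M·u where M = ΔV + |∇V|². -/
open Complex ComplexConjugate MeasureTheory

noncomputable def dX (f : ℂ → ℂ) (z : ℂ) : ℂ := fderiv ℝ f z 1
noncomputable def dY (f : ℂ → ℂ) (z : ℂ) : ℂ := fderiv ℝ f z Complex.I
noncomputable def dbar (f : ℂ → ℂ) (z : ℂ) : ℂ := (dX f z + Complex.I * dY f z) / 2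
noncomputable def dXr (u : ℂ → ℝ) (z : ℂ) : ℝ := fderiv ℝ u z 1
noncomputable def dYr (u : ℂ → ℝ) (z : ℂ) : ℝ := fderiv ℝ u z Complex.I
noncomputable def lapr (u : ℂ → ℝ) (z : ℂ) : ℝ := dXr (dXr u) z + dYr (dYr u) z

noncomputable def dd (c : ℂ) (g : ℂ → ℝ) (z : ℂ) : ℝ := fderiv ℝ g z c

lemma dd_contDiff (c : ℂ) {g : ℂ → ℝ} (hg : ContDiff ℝ (⊤ : ℕ∞) g) :
    ContDiff ℝ (⊤ : ℕ∞) (dd c g) :=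
  (hg.fderiv_right (by simp)).clm_apply contDiff_const

lemma dd_congr {c : ℂ} {g h : ℂ → ℝ} {s : Set ℂ} (hs : IsOpen s) {z : ℂ} (hz : z ∈ s)
    (he : ∀ w ∈ s, g w = h w) : dd c g z = dd c h z := by
  have h' : g =ᶠ[nhds z] h := Filter.eventuallyEq_of_mem (hs.mem_nhds hz) he
  unfold dd
  rw [h'.fderiv_eq]

lemma dd_add {c : ℂ} {g h : ℂ → ℝ} {z : ℂ} (hg : DifferentiableAt ℝ g z)
    (hh : DifferentiableAt ℝ h z) :
    dd c (fun w => g w + h w) z = dd c g z + dd c h z := by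
  unfold dd; rw [fderiv_fun_add hg hh]; rfl

lemma dd_sub {c : ℂ} {g h : ℂ → ℝ} {z : ℂ} (hg : DifferentiableAt ℝ g z)
    (hh : DifferentiableAt ℝ h z) :
    dd c (fun w => g w - h w) z = dd c g z - dd c h z := by
  unfold dd; rw [fderiv_fun_sub hg hh]; rfl

lemma dd_mul {c : ℂ} {g h : ℂ → ℝ} {z : ℂ} (hg : DifferentiableAt ℝ g z)
    (hh : DifferentiableAt ℝ h z) :
    dd c (fun w => g w * h w) z = dd c g z * h z + g z * dd c h z := by
  unfold dd; rw [fderiv_fun_mul hg hh]; simp; ring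

lemma dd_snd {g : ℂ → ℝ} (hg : ContDiff ℝ (⊤ : ℕ∞) g) (c c' z : ℂ) :
    dd c (dd c' g) z = (fderiv ℝ (fderiv ℝ g) z c) c' := by
  have hdf : DifferentiableAt ℝ (fderiv ℝ g) z :=
    (hg.fderiv_right (m := 1) (WithTop.coe_le_coe.mpr le_top)).differentiable one_ne_zero z
  unfold dd
  have : (fun w => fderiv ℝ g w c') =
      (ContinuousLinearMap.apply ℝ ℝ c') ∘ (fderiv ℝ g) := rfl
  rw [this, fderiv_comp z ((ContinuousLinearMap.apply ℝ ℝ c').differentiableAt) hdf,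
    ContinuousLinearMap.fderiv]
  rfl

lemma dd_swap {g : ℂ → ℝ} (hg : ContDiff ℝ (⊤ : ℕ∞) g) (c c' z : ℂ) :
    dd c (dd c' g) z = dd c' (dd c g) z := by
  rw [dd_snd hg, dd_snd hg]
  exact second_derivative_symmetric
    (fun y => ((hg.differentiable (by simp)) y).hasFDerivAt)
    (((hg.fderiv_right (m := 1) (WithTop.coe_le_coe.mpr le_top)).differentiable one_ne_zero z).hasFDerivAt) c c'

lemma fderiv_re' (f : ℂ → ℂ) {z : ℂ} (hf : DifferentiableAt ℝ f z) (c : ℂ) :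
    fderiv ℝ (fun w => (f w).re) z c = (fderiv ℝ f z c).re := by
  have : (fun w => (f w).re) = Complex.reCLM ∘ f := rfl
  rw [this, fderiv_comp z Complex.reCLM.differentiableAt hf, ContinuousLinearMap.fderiv]
  rfl

lemma fderiv_im' (f : ℂ → ℂ) {z : ℂ} (hf : DifferentiableAt ℝ f z) (c : ℂ) :
    fderiv ℝ (fun w => (f w).im) z c = (fderiv ℝ f z c).im := by
  have : (fun w => (f w).im) = Complex.imCLM ∘ f := rfl
  rw [this, fderiv_comp z Complex.imCLM.differentiableAt hf, ContinuousLinearMap.fderiv]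
  rfl

lemma fderiv_ofReal' (V : ℂ → ℝ) {z : ℂ} (hV : DifferentiableAt ℝ V z) (c : ℂ) :
    fderiv ℝ (fun w => (V w : ℂ)) z c = (fderiv ℝ V z c : ℂ) := by
  have : (fun w => (V w : ℂ)) = Complex.ofRealCLM ∘ V := rfl
  rw [this, fderiv_comp z Complex.ofRealCLM.differentiableAt hV, ContinuousLinearMap.fderiv]
  rfl

/-- If `f = u + iv` is `α`-massive holomorphic on an open connected `Ω ⊆ ℂ`
(`∂̄f = (1/2) α conj f` with `α = 2 ∂̄V`), then `Δ(Re f) = M · Re f` with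
`M = ΔV + ‖∇V‖²`. -/
theorem stmt0 (Ω : Set ℂ) (hΩ : IsOpen Ω) (hconn : IsConnected Ω)
    (V : ℂ → ℝ) (hV : ContDiff ℝ (⊤ : ℕ∞) V)
    (α : ℂ → ℂ) (hα : ∀ z, α z = 2 * dbar (fun w => (V w : ℂ)) z)
    (f : ℂ → ℂ) (hf : ContDiff ℝ (⊤ : ℕ∞) f)
    (hmh : ∀ z ∈ Ω, dbar f z = (1 / 2) * α z * conj (f z)) :
    ∀ z ∈ Ω, lapr (fun w => (f w).re) z
      = (lapr V z + ((dXr V z) ^ 2 + (dYr V z) ^ 2)) * (f z).re := by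
  intro z hz
  have hfd : Differentiable ℝ f := hf.differentiable (by simp)
  have hu : ContDiff ℝ (⊤ : ℕ∞) (fun w => (f w).re) := Complex.reCLM.contDiff.comp hf
  have hv : ContDiff ℝ (⊤ : ℕ∞) (fun w => (f w).im) := Complex.imCLM.contDiff.comp hf
  -- α in terms of partials of V
  have hα' : ∀ w, α w = (dd 1 V w : ℂ) + Complex.I * (dd Complex.I V w : ℂ) := by
    intro w
    rw [hα w]
    unfold dbar dX dY dd
    rw [fderiv_ofReal' V (hV.differentiable (by simp) w) 1,
      fderiv_ofReal' V (hV.differentiable (by simp) w) Complex.I]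
    ring
  -- real form of the massive holomorphic equation
  have key : ∀ w ∈ Ω,
      dd 1 (fun w => (f w).re) w - dd Complex.I (fun w => (f w).im) w
        = dd 1 V w * (f w).re + dd Complex.I V w * (f w).im ∧
      dd 1 (fun w => (f w).im) w + dd Complex.I (fun w => (f w).re) w
        = dd Complex.I V w * (f w).re - dd 1 V w * (f w).im := by
    intro w hw
    have e : dX f w + Complex.I * dY f w
        = ((dd 1 V w : ℂ) + Complex.I * (dd Complex.I V w : ℂ)) * conj (f w) := by
      have h := hmh w hw
      unfold dbar at h
      rw [hα' w] at h
      linear_combination (2 : ℂ) * h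
    have hXre : (dX f w).re = dd 1 (fun w => (f w).re) w := (fderiv_re' f (hfd w) 1).symm
    have hXim : (dX f w).im = dd 1 (fun w => (f w).im) w := (fderiv_im' f (hfd w) 1).symm
    have hYre : (dY f w).re = dd Complex.I (fun w => (f w).re) w := (fderiv_re' f (hfd w) Complex.I).symm
    have hYim : (dY f w).im = dd Complex.I (fun w => (f w).im) w := (fderiv_im' f (hfd w) Complex.I).symm
    rw [Complex.ext_iff] at e
    obtain ⟨e1, e2⟩ := e
    simp [Complex.add_re, Complex.add_im, Complex.mul_re, Complex.mul_im] at e1 e2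
    constructor
    · rw [← hXre, ← hYim]; linarith [e1]
    · rw [← hXim, ← hYre]; linarith [e2]
  have h1 : ∀ w ∈ Ω, dd 1 (fun w => (f w).re) w
      = dd Complex.I (fun w => (f w).im) w + (dd 1 V w * (f w).re + dd Complex.I V w * (f w).im) := by
    intro w hw; have := (key w hw).1; linarith
  have h2 : ∀ w ∈ Ω, dd Complex.I (fun w => (f w).re) w
      = (dd Complex.I V w * (f w).re - dd 1 V w * (f w).im) - dd 1 (fun w => (f w).im) w := by
    intro w hw; have := (key w hw).2; linarith
  -- differentiability facts
  have dVx : DifferentiableAt ℝ (dd 1 V) z := (dd_contDiff 1 hV).differentiable (by simp) z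
  have dVy : DifferentiableAt ℝ (dd Complex.I V) z := (dd_contDiff Complex.I hV).differentiable (by simp) z
  have dux : DifferentiableAt ℝ (fun w => (f w).re) z := hu.differentiable (by simp) z
  have dvx : DifferentiableAt ℝ (fun w => (f w).im) z := hv.differentiable (by simp) z
  have dvy : DifferentiableAt ℝ (dd Complex.I (fun w => (f w).im)) z :=
    (dd_contDiff Complex.I hv).differentiable (by simp) z
  have dvX : DifferentiableAt ℝ (dd 1 (fun w => (f w).im)) z :=
    (dd_contDiff 1 hv).differentiable (by simp) z
  have dP : DifferentiableAt ℝ (fun w => dd 1 V w * (f w).re) z :=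
    ((dd_contDiff 1 hV).mul hu).differentiable (by simp) z
  have dQ : DifferentiableAt ℝ (fun w => dd Complex.I V w * (f w).im) z :=
    ((dd_contDiff Complex.I hV).mul hv).differentiable (by simp) z
  have dP2 : DifferentiableAt ℝ (fun w => dd Complex.I V w * (f w).re) z :=
    ((dd_contDiff Complex.I hV).mul hu).differentiable (by simp) z
  have dQ2 : DifferentiableAt ℝ (fun w => dd 1 V w * (f w).im) z :=
    ((dd_contDiff 1 hV).mul hv).differentiable (by simp) z
  -- expand dXr (dXr u)
  have A : dd 1 (dd 1 (fun w => (f w).re)) z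
      = dd 1 (dd Complex.I (fun w => (f w).im)) z
        + (dd 1 (dd 1 V) z * (f z).re + dd 1 V z * dd 1 (fun w => (f w).re) z)
        + (dd 1 (dd Complex.I V) z * (f z).im + dd Complex.I V z * dd 1 (fun w => (f w).im) z) := by
    have := dd_congr (c := 1) hΩ hz h1
    rw [this, dd_add dvy (dP.fun_add dQ), dd_add dP dQ, dd_mul dVx dux, dd_mul dVy dvx]
    ring
  -- expand dYr (dYr u)
  have B : dd Complex.I (dd Complex.I (fun w => (f w).re)) z
      = (dd Complex.I (dd Complex.I V) z * (f z).re + dd Complex.I V z * dd Complex.I (fun w => (f w).re) z)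
        - (dd Complex.I (dd 1 V) z * (f z).im + dd 1 V z * dd Complex.I (fun w => (f w).im) z)
        - dd Complex.I (dd 1 (fun w => (f w).im)) z := by
    have := dd_congr (c := Complex.I) hΩ hz h2
    rw [this, dd_sub (dP2.fun_sub dQ2) dvX, dd_sub dP2 dQ2, dd_mul dVy dux, dd_mul dVx dvx]
  have swapv := dd_swap hv 1 Complex.I z
  have swapV := dd_swap hV 1 Complex.I z
  show dd 1 (dd 1 (fun w => (f w).re)) z + dd Complex.I (dd Complex.I (fun w => (f w).re)) z
    = (dd 1 (dd 1 V) z + dd Complex.I (dd Complex.I V) z + ((dd 1 V z) ^ 2 + (dd Complex.I V z) ^ 2)) * (f z).re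
  rw [A, B]
  have k1' := (key z hz).1
  have k2' := (key z hz).2
  linear_combination swapv + (f z).im * swapV + dd 1 V z * k1' + dd Complex.I V z * k2'
end

section
/- For any real-valued massive harmonic function u on a connected open set Ω and a fixed point x ∈ Ω, there is at most one massive harmonic conjugate v with v(x) = 0; i.e., if f = u + iv and g = u + iv' are both α-massive holomorphic with v(x) = v'(x) = 0, then v = v'. -/
open Complex ComplexConjugate MeasureTheory

set_option linter.unusedTactic false

lemma clm_eq_zero (L : ℂ →L[ℝ] ℝ) (h1 : L 1 = 0) (h2 : L Complex.I = 0) : L = 0 := by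
  ext t
  have ht : t = t.re • (1:ℂ) + t.im • Complex.I := by
    simp [Complex.real_smul, Complex.re_add_im]
  rw [show (L t : ℝ) = L (t.re • (1:ℂ) + t.im • Complex.I) by rw [← ht]]
  rw [map_add, _root_.map_smul, _root_.map_smul, h1, h2]
  simp

lemma hasFDerivAt_pair (p q : ℂ → ℝ) (hp : ContDiff ℝ (⊤ : ℕ∞) p) (hq : ContDiff ℝ (⊤ : ℕ∞) q) (z : ℂ) :
    HasFDerivAt (fun w => (p w : ℂ) + (q w : ℂ) * Complex.I)
      (Complex.ofRealCLM.comp (fderiv ℝ p z) + (fderiv ℝ q z).smulRight Complex.I) z := by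
  have h1 : HasFDerivAt (fun w => ((p w : ℝ) : ℂ)) (Complex.ofRealCLM.comp (fderiv ℝ p z)) z :=
    Complex.ofRealCLM.hasFDerivAt.comp z ((hp.differentiable (by simp) z).hasFDerivAt)
  have h2 : HasFDerivAt (fun w => q w • (Complex.I))
      ((fderiv ℝ q z).smulRight Complex.I) z :=
    ((hq.differentiable (by simp) z).hasFDerivAt).smul_const Complex.I
  have := h1.fun_add h2
  simpa [Complex.real_smul] using this

lemma dbar_pair (p q : ℂ → ℝ) (hp : ContDiff ℝ (⊤ : ℕ∞) p) (hq : ContDiff ℝ (⊤ : ℕ∞) q) (z : ℂ) :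
    dbar (fun w => (p w : ℂ) + (q w : ℂ) * Complex.I) z
      = (((dXr p z - dYr q z : ℝ) : ℂ) + ((dYr p z + dXr q z : ℝ) : ℂ) * Complex.I) / 2 := by
  have hd := (hasFDerivAt_pair p q hp hq z).fderiv
  simp only [dbar, dX, dY, hd, dXr, dYr]
  simp [ContinuousLinearMap.add_apply, ContinuousLinearMap.comp_apply,
    ContinuousLinearMap.smulRight_apply, Complex.real_smul]
  push_cast
  ring_nf
  rw [Complex.I_sq]
  ring

/-- For a real-valued massive harmonic function `u` on a connected open `Ω` and a fixed
point `x ∈ Ω`, there is at most one massive harmonic conjugate `v` with `v x = 0`: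
if `f = u + iv` and `g = u + iv'` are both `α`-massive holomorphic with
`v x = v' x = 0`, then `v = v'` on `Ω`. -/
theorem stmt6 (Ω : Set ℂ) (hΩ : IsOpen Ω) (hconn : IsConnected Ω)
    (V : ℂ → ℝ) (hV : ContDiff ℝ (⊤ : ℕ∞) V)
    (α : ℂ → ℂ) (hα : ∀ z, α z = (dXr V z : ℂ) + Complex.I * (dYr V z : ℂ))
    (u v v' : ℂ → ℝ) (hu : ContDiff ℝ (⊤ : ℕ∞) u) (hv : ContDiff ℝ (⊤ : ℕ∞) v) (hv' : ContDiff ℝ (⊤ : ℕ∞) v')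
    (hmassive : ∀ z ∈ Ω,
      lapr u z = (lapr V z + ((dXr V z) ^ 2 + (dYr V z) ^ 2)) * u z)
    (hf : ∀ z ∈ Ω, dbar (fun w => (u w : ℂ) + (v w : ℂ) * Complex.I) z
      = (1 / 2) * α z * conj ((u z : ℂ) + (v z : ℂ) * Complex.I))
    (hg : ∀ z ∈ Ω, dbar (fun w => (u w : ℂ) + (v' w : ℂ) * Complex.I) z
      = (1 / 2) * α z * conj ((u z : ℂ) + (v' z : ℂ) * Complex.I))
    (x : ℂ) (hx : x ∈ Ω) (hvx : v x = 0) (hv'x : v' x = 0) :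
    ∀ z ∈ Ω, v z = v' z := by
  set w : ℂ → ℝ := fun z => v z - v' z with hw
  have hwdiff : ContDiff ℝ (⊤ : ℕ∞) w := hv.sub hv'
  -- key gradient equations for w
  have key : ∀ z ∈ Ω, dXr w z = -(dXr V z) * w z ∧ dYr w z = -(dYr V z) * w z := by
    intro z hz
    have Ef := hf z hz
    have Eg := hg z hz
    rw [dbar_pair u v hu hv z, hα z] at Ef
    rw [dbar_pair u v' hu hv' z, hα z] at Eg
    have Ef1 := congrArg Complex.re Ef
    have Ef2 := congrArg Complex.im Ef
    have Eg1 := congrArg Complex.re Eg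
    have Eg2 := congrArg Complex.im Eg
    simp [Complex.ext_iff, Complex.add_re, Complex.add_im, Complex.mul_re, Complex.mul_im,
      Complex.div_re, Complex.div_im, Complex.normSq] at Ef1 Ef2 Eg1 Eg2
    have hwx : dXr w z = dXr v z - dXr v' z := by
      simp only [dXr, hw]
      rw [fderiv_fun_sub (hv.differentiable (by simp) z) (hv'.differentiable (by simp) z)]
      simp
    have hwy : dYr w z = dYr v z - dYr v' z := by
      simp only [dYr, hw]
      rw [fderiv_fun_sub (hv.differentiable (by simp) z) (hv'.differentiable (by simp) z)]
      simp
    constructor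
    · rw [hwx]; simp only [hw]; nlinarith [Ef2, Eg2]
    · rw [hwy]; simp only [hw]; nlinarith [Ef1, Eg1]
  -- h = w * exp V has zero derivative on Ω
  set h : ℂ → ℝ := fun z => w z * Real.exp (V z) with hh
  have hderiv : ∀ z ∈ Ω, fderiv ℝ h z = 0 := by
    intro z hz
    have hV' : HasFDerivAt (fun z => Real.exp (V z))
        (Real.exp (V z) • fderiv ℝ V z) z := ((hV.differentiable (by simp) z).hasFDerivAt).exp
    have hw' : HasFDerivAt w (fderiv ℝ w z) z := (hwdiff.differentiable (by simp) z).hasFDerivAt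
    have hprod : HasFDerivAt h
        (w z • (Real.exp (V z) • fderiv ℝ V z) + Real.exp (V z) • fderiv ℝ w z) z :=
      hw'.mul hV'
    rw [hprod.fderiv]
    apply clm_eq_zero
    · have h1 := (key z hz).1
      simp only [ContinuousLinearMap.add_apply, ContinuousLinearMap.smul_apply, smul_eq_mul]
      have : (fderiv ℝ w z) 1 = dXr w z := rfl
      rw [this, h1]
      have : (fderiv ℝ V z) 1 = dXr V z := rfl
      rw [this]; ring
    · have h2 := (key z hz).2
      simp only [ContinuousLinearMap.add_apply, ContinuousLinearMap.smul_apply, smul_eq_mul]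
      have : (fderiv ℝ w z) Complex.I = dYr w z := rfl
      rw [this, h2]
      have : (fderiv ℝ V z) Complex.I = dYr V z := rfl
      rw [this]; ring
  have hhdiff : ContDiff ℝ (⊤ : ℕ∞) h := hwdiff.mul (Real.contDiff_exp.comp hV)
  -- locally constant: h is constant on any ball inside Ω
  have hloc : ∀ z ∈ Ω, ∃ r > 0, Metric.ball z r ⊆ Ω ∧ ∀ y ∈ Metric.ball z r, h y = h z := by
    intro z hz
    obtain ⟨r, hr, hball⟩ := Metric.isOpen_iff.1 hΩ z hz
    refine ⟨r, hr, hball, fun y hy => ?_⟩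
    refine (convex_ball z r).is_const_of_fderivWithin_eq_zero
      ((hhdiff.differentiable (by simp)).differentiableOn) (fun p hp => ?_) hy (Metric.mem_ball_self hr)
    rw [fderivWithin_of_isOpen Metric.isOpen_ball hp]
    exact hderiv p (hball hp)
  -- clopen argument
  set S : Set ℂ := {z | z ∈ Ω ∧ h z = 0} with hS
  have hhx : h x = 0 := by simp [hh, hw, hvx, hv'x]
  have hSopen : IsOpen S := by
    rw [Metric.isOpen_iff]
    intro z hz
    obtain ⟨r, hr, hball, hc⟩ := hloc z hz.1
    exact ⟨r, hr, fun y hy => ⟨hball hy, by rw [hc y hy, hz.2]⟩⟩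
  have hTopen : IsOpen {z | z ∈ Ω ∧ h z ≠ 0} := by
    rw [Metric.isOpen_iff]
    intro z hz
    obtain ⟨r, hr, hball, hc⟩ := hloc z hz.1
    exact ⟨r, hr, fun y hy => ⟨hball hy, by rw [hc y hy]; exact hz.2⟩⟩
  have hsub : Ω ⊆ S ∪ {z | z ∈ Ω ∧ h z ≠ 0} := by
    intro z hz
    by_cases hc : h z = 0
    · exact Or.inl ⟨hz, hc⟩
    · exact Or.inr ⟨hz, hc⟩
  have hall : ∀ z ∈ Ω, h z = 0 := by
    by_contra hcon
    push_neg at hcon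
    obtain ⟨z₀, hz₀, hz₀'⟩ := hcon
    have := hconn.isPreconnected S {z | z ∈ Ω ∧ h z ≠ 0} hSopen hTopen hsub
      ⟨x, hx, hx, hhx⟩ ⟨z₀, hz₀, hz₀, hz₀'⟩
    obtain ⟨p, _, ⟨_, hp1⟩, ⟨_, hp2⟩⟩ := this
    exact hp2 hp1
  intro z hz
  have := hall z hz
  have hexp : Real.exp (V z) ≠ 0 := Real.exp_ne_zero _
  have : w z = 0 := by
    have := mul_eq_zero.1 this
    tauto
  simpa [hw, sub_eq_zero] using this
end

section
/- The discrete operator K*K is block diagonal with respect to the decomposition B = Γ ∪ Γ*, and on the Γ × Γ block equals −Δ_#^d + mI, where m(x) = e^{−V(x)}·(Δ_# e^V)(x) is the discrete mass function. In particular, for adjacent primal vertices x₁ ∼ x₂ one has (K*K)_{x₁,x₂} = −c_{x₁,x₂}, and for x ∈ Γ one has (K*K)_{x,x} = m(x) − (Δ_#)_{x,x}. -/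
open Complex ComplexConjugate

/-- The matrix `K*K` on black vertices: `(K*K)_{b₁,b₂} = ∑_w conj(K(w,b₁))·K(w,b₂)`. -/
noncomputable def KstarK {W B : Type*} [Fintype W] (K : W → B → ℂ) (b₁ b₂ : B) : ℂ :=
  ∑ w : W, conj (K w b₁) * K w b₂

private lemma aux1 (a b c t : ℝ) (ht : 0 < t) :
    Real.sqrt (Real.exp (a - b) * t) * (Real.exp c / Real.sqrt (Real.exp (b + a) * t))
      = Real.exp (c - b) := by
  have h1 : (0:ℝ) ≤ Real.exp (a - b) * t := by positivity
  have hA : Real.sqrt (Real.exp (a - b) * t) * (Real.exp c / Real.sqrt (Real.exp (b + a) * t))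
      = Real.exp c * Real.sqrt ((Real.exp (a - b) * t) / (Real.exp (b + a) * t)) := by
    rw [Real.sqrt_div h1]; ring
  rw [hA, mul_div_mul_right _ _ (ne_of_gt ht), ← Real.exp_sub,
    show a - b - (b + a) = -b + -b by ring, Real.exp_add,
    Real.sqrt_mul_self (Real.exp_nonneg _), ← Real.exp_add]
  exact congrArg Real.exp (by ring)

private lemma aux2 (a b t : ℝ) (ht : 0 ≤ t) :
    Real.sqrt (Real.exp (a - b) * t) * Real.sqrt (Real.exp (b - a) * t) = t := by
  rw [← Real.sqrt_mul (by positivity),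
    show Real.exp (a - b) * t * (Real.exp (b - a) * t)
      = Real.exp (a - b) * Real.exp (b - a) * (t * t) by ring,
    ← Real.exp_add, show a - b + (b - a) = 0 by ring, Real.exp_zero, one_mul,
    Real.sqrt_mul_self ht]

/-- `K*K` is block diagonal with respect to `B = Γ ⊕ Γ*`, and on the `Γ × Γ` block equals
`−Δ_#^d + mI` with `m(x) = e^{−V(x)}(Δ_# e^V)(x)`: in particular, for adjacent primal
vertices `(K*K)_{x₁,x₂} = −c_{x₁,x₂}`, and on the diagonal
`(K*K)_{x,x} = m(x) − (Δ_#)_{x,x}`.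
Here `W` are the white vertices (rhombi centers), each rhombus `x⁻ y⁻ x⁺ y⁺` has primal
corners `xm w, xp w ∈ Γ`, dual corners `ym w, yp w ∈ Γ*`, half-angle `θ w`; the
gauge-changed weights `ctil` and Kasteleyn phases `ζ` (cyclically `1, i, −1, −i` around
each white vertex, with product `−1` around each face) are as in the paper, and
`K(w,b) = ctil(w,b)·ζ(w,b)`. -/
theorem stmt7 {Γ Γs W : Type*} [Fintype W] [Fintype Γ] [DecidableEq Γ] [DecidableEq Γs]
    (xm xp : W → Γ) (ym yp : W → Γs) (θ : W → ℝ)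
    (hθ : ∀ w, 0 < θ w ∧ θ w < Real.pi / 2)
    (hx : ∀ w, xm w ≠ xp w) (hy : ∀ w, ym w ≠ yp w)
    (V : Γ ⊕ Γs → ℝ)
    (ctil : W → Γ ⊕ Γs → ℝ)
    (hc1 : ∀ w, ctil w (Sum.inl (xp w)) =
      Real.sqrt (Real.exp (V (Sum.inl (xm w)) - V (Sum.inl (xp w))) * Real.tan (θ w)))
    (hc2 : ∀ w, ctil w (Sum.inl (xm w)) =
      Real.sqrt (Real.exp (V (Sum.inl (xp w)) - V (Sum.inl (xm w))) * Real.tan (θ w)))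
    (hc3 : ∀ w, ctil w (Sum.inr (yp w)) =
      Real.exp (V (Sum.inr (yp w))) /
        Real.sqrt (Real.exp (V (Sum.inl (xp w)) + V (Sum.inl (xm w))) * Real.tan (θ w)))
    (hc4 : ∀ w, ctil w (Sum.inr (ym w)) =
      Real.exp (V (Sum.inr (ym w))) /
        Real.sqrt (Real.exp (V (Sum.inl (xp w)) + V (Sum.inl (xm w))) * Real.tan (θ w)))
    (hc0 : ∀ w b, b ≠ Sum.inl (xm w) → b ≠ Sum.inl (xp w) → b ≠ Sum.inr (ym w) →
      b ≠ Sum.inr (yp w) → ctil w b = 0)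
    (ζ : W → Γ ⊕ Γs → ℂ)
    (hζ1 : ∀ w, ‖ζ w (Sum.inl (xm w))‖ = 1)
    (hζ2 : ∀ w, ζ w (Sum.inr (ym w)) = Complex.I * ζ w (Sum.inl (xm w)))
    (hζ3 : ∀ w, ζ w (Sum.inl (xp w)) = Complex.I * ζ w (Sum.inr (ym w)))
    (hζ4 : ∀ w, ζ w (Sum.inr (yp w)) = Complex.I * ζ w (Sum.inl (xp w)))
    (hface : ∀ (x : Γ) (y : Γs) (w₁ w₂ : W), w₁ ≠ w₂ →
      ctil w₁ (Sum.inl x) ≠ 0 → ctil w₁ (Sum.inr y) ≠ 0 →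
      ctil w₂ (Sum.inl x) ≠ 0 → ctil w₂ (Sum.inr y) ≠ 0 →
      ζ w₁ (Sum.inl x) * conj (ζ w₁ (Sum.inr y)) * ζ w₂ (Sum.inr y) * conj (ζ w₂ (Sum.inl x))
        = -1)
    (hpairs : ∀ (x : Γ) (y : Γs),
      Set.ncard {w : W | ctil w (Sum.inl x) ≠ 0 ∧ ctil w (Sum.inr y) ≠ 0} = 0 ∨
      Set.ncard {w : W | ctil w (Sum.inl x) ≠ 0 ∧ ctil w (Sum.inr y) ≠ 0} = 2)
    (K : W → Γ ⊕ Γs → ℂ)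
    (hK : ∀ w b, K w b = (ctil w b : ℂ) * ζ w b)
    -- the critical conductances on the primal graph
    (c0 : Γ → Γ → ℝ)
    (hc0def : ∀ x₁ x₂, c0 x₁ x₂ = ∑ w : W,
      if (xm w = x₁ ∧ xp w = x₂) ∨ (xm w = x₂ ∧ xp w = x₁) then Real.tan (θ w) else 0)
    -- the discrete mass function `m(x) = e^{−V(x)}·(Δ_# e^V)(x)`
    (m : Γ → ℝ)
    (hm : ∀ x, m x = Real.exp (-(V (Sum.inl x))) *
      ∑ x' : Γ, c0 x x' * (Real.exp (V (Sum.inl x')) - Real.exp (V (Sum.inl x)))) :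
    -- `K*K` vanishes on the off-diagonal blocks `Γ × Γ*` and `Γ* × Γ`
    (∀ (x : Γ) (y : Γs),
      KstarK K (Sum.inl x) (Sum.inr y) = 0 ∧ KstarK K (Sum.inr y) (Sum.inl x) = 0) ∧
    -- off-diagonal `Γ × Γ` entries: `(K*K)_{x₁,x₂} = −c_{x₁,x₂}`
    (∀ x₁ x₂ : Γ, x₁ ≠ x₂ →
      KstarK K (Sum.inl x₁) (Sum.inl x₂) = -((c0 x₁ x₂ : ℝ) : ℂ)) ∧
    -- diagonal entries: `(K*K)_{x,x} = m(x) − (Δ_#)_{x,x} = m(x) + ∑_{x'} c⁰_{x,x'}`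
    (∀ x : Γ,
      KstarK K (Sum.inl x) (Sum.inl x) = ((m x + ∑ x' : Γ, c0 x x' : ℝ) : ℂ)) := by
  classical
  have htan : ∀ w, 0 < Real.tan (θ w) := fun w =>
    Real.tan_pos_of_pos_of_lt_pi_div_two (hθ w).1 (hθ w).2
  -- zeta facts
  have hζxp : ∀ w, ζ w (Sum.inl (xp w)) = -ζ w (Sum.inl (xm w)) := by
    intro w; rw [hζ3, hζ2, ← mul_assoc, Complex.I_mul_I, neg_one_mul]
  have haxp : ∀ w, ‖ζ w (Sum.inl (xp w))‖ = 1 := by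
    intro w; rw [hζxp w, norm_neg, hζ1 w]
  have haym : ∀ w, ‖ζ w (Sum.inr (ym w))‖ = 1 := by
    intro w; rw [hζ2 w, norm_mul, Complex.norm_I, one_mul, hζ1 w]
  have hayp : ∀ w, ‖ζ w (Sum.inr (yp w))‖ = 1 := by
    intro w; rw [hζ4 w, norm_mul, Complex.norm_I, one_mul, haxp w]
  have hmemx : ∀ w x, ctil w (Sum.inl x) ≠ 0 → x = xm w ∨ x = xp w := by
    intro w x h; by_contra hcon; push_neg at hcon
    exact h (hc0 w _ (by simpa using hcon.1) (by simpa using hcon.2) (by simp) (by simp))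
  have hmemy : ∀ w y, ctil w (Sum.inr y) ≠ 0 → y = ym w ∨ y = yp w := by
    intro w y h; by_contra hcon; push_neg at hcon
    exact h (hc0 w _ (by simp) (by simp) (by simpa using hcon.1) (by simpa using hcon.2))
  have habsx : ∀ w x, ctil w (Sum.inl x) ≠ 0 → ‖ζ w (Sum.inl x)‖ = 1 := by
    intro w x h
    rcases hmemx w x h with rfl | rfl
    · exact hζ1 w
    · exact haxp w
  have habsy : ∀ w y, ctil w (Sum.inr y) ≠ 0 → ‖ζ w (Sum.inr y)‖ = 1 := by
    intro w y h
    rcases hmemy w y h with rfl | rfl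
    · exact haym w
    · exact hayp w
  have hζsq : ∀ w, conj (ζ w (Sum.inl (xm w))) * ζ w (Sum.inl (xm w)) = 1 := by
    intro w
    rw [mul_comm, Complex.mul_conj, Complex.normSq_eq_norm_sq, hζ1 w]
    norm_num
  have hζnegpair : ∀ w, conj (ζ w (Sum.inl (xm w))) * ζ w (Sum.inl (xp w)) = -1 := by
    intro w; rw [hζxp w, mul_neg, hζsq w]
  have hζnegpair' : ∀ w, conj (ζ w (Sum.inl (xp w))) * ζ w (Sum.inl (xm w)) = -1 := by
    intro w; rw [hζxp w, map_neg, neg_mul, hζsq w]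
  have hζsq' : ∀ w, conj (ζ w (Sum.inl (xp w))) * ζ w (Sum.inl (xp w)) = 1 := by
    intro w; rw [hζxp w, map_neg, neg_mul_neg, hζsq w]
  -- product of ctil weights across a rhombus
  have hprod : ∀ w (x : Γ) (y : Γs), ctil w (Sum.inl x) ≠ 0 → ctil w (Sum.inr y) ≠ 0 →
      ctil w (Sum.inl x) * ctil w (Sum.inr y)
        = Real.exp (V (Sum.inr y) - V (Sum.inl x)) := by
    intro w x y hx' hy'
    have hcomm : V (Sum.inl (xp w)) + V (Sum.inl (xm w))
        = V (Sum.inl (xm w)) + V (Sum.inl (xp w)) := add_comm _ _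
    rcases hmemx w x hx' with rfl | rfl <;> rcases hmemy w y hy' with rfl | rfl
    · rw [hc2, hc4, hcomm]; exact aux1 _ _ _ _ (htan w)
    · rw [hc2, hc3, hcomm]; exact aux1 _ _ _ _ (htan w)
    · rw [hc1, hc4]; exact aux1 _ _ _ _ (htan w)
    · rw [hc1, hc3]; exact aux1 _ _ _ _ (htan w)
  -- Part 1 : off-diagonal blocks vanish
  have part1 : ∀ (x : Γ) (y : Γs), KstarK K (Sum.inl x) (Sum.inr y) = 0 := by
    intro x y
    have hf0 : ∀ w, w ∉ {w : W | ctil w (Sum.inl x) ≠ 0 ∧ ctil w (Sum.inr y) ≠ 0} →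
        conj (K w (Sum.inl x)) * K w (Sum.inr y) = 0 := by
      intro w hw
      simp only [Set.mem_setOf_eq, not_and_or, not_not] at hw
      rcases hw with h | h <;> simp [hK, h]
    have hterm : ∀ w, ctil w (Sum.inl x) ≠ 0 → ctil w (Sum.inr y) ≠ 0 →
        conj (K w (Sum.inl x)) * K w (Sum.inr y)
          = (Real.exp (V (Sum.inr y) - V (Sum.inl x)) : ℂ)
            * (conj (ζ w (Sum.inl x)) * ζ w (Sum.inr y)) := by
      intro w hx' hy'
      simp only [hK, map_mul, Complex.conj_ofReal]
      have h2 : ((ctil w (Sum.inl x) : ℂ)) * (ctil w (Sum.inr y) : ℂ)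
          = (Real.exp (V (Sum.inr y) - V (Sum.inl x)) : ℂ) := by
        rw [← Complex.ofReal_mul, hprod w x y hx' hy']
      calc (ctil w (Sum.inl x) : ℂ) * conj (ζ w (Sum.inl x))
            * ((ctil w (Sum.inr y) : ℂ) * ζ w (Sum.inr y))
          = ((ctil w (Sum.inl x) : ℂ) * (ctil w (Sum.inr y) : ℂ))
            * (conj (ζ w (Sum.inl x)) * ζ w (Sum.inr y)) := by ring
        _ = _ := by rw [h2]
    rcases hpairs x y with h0 | h2
    · have hSe : {w : W | ctil w (Sum.inl x) ≠ 0 ∧ ctil w (Sum.inr y) ≠ 0} = ∅ :=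
        (Set.ncard_eq_zero (Set.toFinite _)).mp h0
      simp only [KstarK]
      exact Finset.sum_eq_zero fun w _ => hf0 w (by simp [hSe])
    · obtain ⟨w₁, w₂, hne, hSeq⟩ := Set.ncard_eq_two.mp h2
      have hw₁ : w₁ ∈ {w : W | ctil w (Sum.inl x) ≠ 0 ∧ ctil w (Sum.inr y) ≠ 0} := by
        rw [hSeq]; exact Set.mem_insert _ _
      have hw₂ : w₂ ∈ {w : W | ctil w (Sum.inl x) ≠ 0 ∧ ctil w (Sum.inr y) ≠ 0} := by
        rw [hSeq]; exact Set.mem_insert_of_mem _ rfl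
      obtain ⟨h1x, h1y⟩ := hw₁
      obtain ⟨h2x, h2y⟩ := hw₂
      have hsum : KstarK K (Sum.inl x) (Sum.inr y)
          = conj (K w₁ (Sum.inl x)) * K w₁ (Sum.inr y)
            + conj (K w₂ (Sum.inl x)) * K w₂ (Sum.inr y) := by
        have e1 : ∑ w : W, conj (K w (Sum.inl x)) * K w (Sum.inr y)
            = ∑ w ∈ ({w₁, w₂} : Finset W), conj (K w (Sum.inl x)) * K w (Sum.inr y) := by
          refine (Finset.sum_subset (Finset.subset_univ _) ?_).symm
          intro w _ hw
          refine hf0 w ?_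
          rw [hSeq]
          intro hmem
          simp only [Set.mem_insert_iff, Set.mem_singleton_iff] at hmem
          rcases hmem with h | h <;> exact hw (by simp [h])
        simp only [KstarK]
        rw [e1, Finset.sum_pair hne]
      have hu : conj (conj (ζ w₁ (Sum.inl x)) * ζ w₁ (Sum.inr y))
          * (conj (ζ w₂ (Sum.inl x)) * ζ w₂ (Sum.inr y)) = -1 := by
        have hf := hface x y w₁ w₂ hne h1x h1y h2x h2y
        simp only [map_mul, Complex.conj_conj]
        linear_combination hf
      have habs1 : ‖conj (ζ w₁ (Sum.inl x)) * ζ w₁ (Sum.inr y)‖ = 1 := by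
        rw [norm_mul, Complex.norm_conj, habsx w₁ x h1x, habsy w₁ y h1y, one_mul]
      have hu1 : (conj (ζ w₁ (Sum.inl x)) * ζ w₁ (Sum.inr y))
          * conj (conj (ζ w₁ (Sum.inl x)) * ζ w₁ (Sum.inr y)) = 1 := by
        rw [Complex.mul_conj, Complex.normSq_eq_norm_sq, habs1]
        norm_num
      have hu2eq : conj (ζ w₂ (Sum.inl x)) * ζ w₂ (Sum.inr y)
          = -(conj (ζ w₁ (Sum.inl x)) * ζ w₁ (Sum.inr y)) := by
        calc conj (ζ w₂ (Sum.inl x)) * ζ w₂ (Sum.inr y)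
            = ((conj (ζ w₁ (Sum.inl x)) * ζ w₁ (Sum.inr y))
                * conj (conj (ζ w₁ (Sum.inl x)) * ζ w₁ (Sum.inr y)))
              * (conj (ζ w₂ (Sum.inl x)) * ζ w₂ (Sum.inr y)) := by rw [hu1, one_mul]
          _ = (conj (ζ w₁ (Sum.inl x)) * ζ w₁ (Sum.inr y))
              * (conj (conj (ζ w₁ (Sum.inl x)) * ζ w₁ (Sum.inr y))
                * (conj (ζ w₂ (Sum.inl x)) * ζ w₂ (Sum.inr y))) := by ring
          _ = _ := by rw [hu]; ring
      rw [hsum, hterm w₁ h1x h1y, hterm w₂ h2x h2y, hu2eq]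
      ring
  have part1b : ∀ (x : Γ) (y : Γs), KstarK K (Sum.inr y) (Sum.inl x) = 0 := by
    intro x y
    have hconj : KstarK K (Sum.inr y) (Sum.inl x)
        = conj (KstarK K (Sum.inl x) (Sum.inr y)) := by
      simp only [KstarK, map_sum, map_mul, Complex.conj_conj]
      exact Finset.sum_congr rfl fun w _ => by ring
    rw [hconj, part1 x y, map_zero]
  -- Part 2 : off-diagonal Γ × Γ entries
  have part2 : ∀ x₁ x₂ : Γ, x₁ ≠ x₂ →
      KstarK K (Sum.inl x₁) (Sum.inl x₂) = -((c0 x₁ x₂ : ℝ) : ℂ) := by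
    intro x₁ x₂ hne
    have hterm : ∀ w : W, conj (K w (Sum.inl x₁)) * K w (Sum.inl x₂)
        = -(((if (xm w = x₁ ∧ xp w = x₂) ∨ (xm w = x₂ ∧ xp w = x₁)
              then Real.tan (θ w) else 0 : ℝ)) : ℂ) := by
      intro w
      by_cases hcond : (xm w = x₁ ∧ xp w = x₂) ∨ (xm w = x₂ ∧ xp w = x₁)
      · rw [if_pos hcond]
        rcases hcond with ⟨h1, h2⟩ | ⟨h1, h2⟩
        · subst h1; subst h2
          simp only [hK, map_mul, Complex.conj_ofReal]
          have hct : (ctil w (Sum.inl (xm w)) : ℂ) * (ctil w (Sum.inl (xp w)) : ℂ)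
              = (Real.tan (θ w) : ℂ) := by
            rw [← Complex.ofReal_mul, hc2, hc1, aux2 _ _ _ (le_of_lt (htan w))]
          calc (ctil w (Sum.inl (xm w)) : ℂ) * conj (ζ w (Sum.inl (xm w)))
                * ((ctil w (Sum.inl (xp w)) : ℂ) * ζ w (Sum.inl (xp w)))
              = ((ctil w (Sum.inl (xm w)) : ℂ) * (ctil w (Sum.inl (xp w)) : ℂ))
                * (conj (ζ w (Sum.inl (xm w))) * ζ w (Sum.inl (xp w))) := by ring
            _ = -(Real.tan (θ w) : ℂ) := by rw [hct, hζnegpair w]; ring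
        · subst h1; subst h2
          simp only [hK, map_mul, Complex.conj_ofReal]
          have hct : (ctil w (Sum.inl (xp w)) : ℂ) * (ctil w (Sum.inl (xm w)) : ℂ)
              = (Real.tan (θ w) : ℂ) := by
            rw [← Complex.ofReal_mul, hc2, hc1, mul_comm,
              aux2 _ _ _ (le_of_lt (htan w))]
          calc (ctil w (Sum.inl (xp w)) : ℂ) * conj (ζ w (Sum.inl (xp w)))
                * ((ctil w (Sum.inl (xm w)) : ℂ) * ζ w (Sum.inl (xm w)))
              = ((ctil w (Sum.inl (xp w)) : ℂ) * (ctil w (Sum.inl (xm w)) : ℂ))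
                * (conj (ζ w (Sum.inl (xp w))) * ζ w (Sum.inl (xm w))) := by ring
            _ = -(Real.tan (θ w) : ℂ) := by rw [hct, hζnegpair' w]; ring
      · rw [if_neg hcond]
        have hzero : ctil w (Sum.inl x₁) = 0 ∨ ctil w (Sum.inl x₂) = 0 := by
          by_contra hc
          push_neg at hc
          rcases hmemx w x₁ hc.1 with h1 | h1 <;> rcases hmemx w x₂ hc.2 with h2 | h2
          · exact hne (h1.trans h2.symm)
          · exact hcond (Or.inl ⟨h1.symm, h2.symm⟩)
          · exact hcond (Or.inr ⟨h2.symm, h1.symm⟩)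
          · exact hne (h1.trans h2.symm)
        rcases hzero with h | h <;> simp [hK, h]
    simp only [KstarK]
    calc ∑ w : W, conj (K w (Sum.inl x₁)) * K w (Sum.inl x₂)
        = ∑ w : W, -(((if (xm w = x₁ ∧ xp w = x₂) ∨ (xm w = x₂ ∧ xp w = x₁)
              then Real.tan (θ w) else 0 : ℝ)) : ℂ) :=
          Finset.sum_congr rfl fun w _ => hterm w
      _ = -((c0 x₁ x₂ : ℝ) : ℂ) := by
          rw [hc0def x₁ x₂, Finset.sum_neg_distrib, Complex.ofReal_sum]
  -- Part 3 : diagonal entries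
  have part3 : ∀ x : Γ, KstarK K (Sum.inl x) (Sum.inl x)
      = ((m x + ∑ x' : Γ, c0 x x' : ℝ) : ℂ) := by
    intro x
    have hterm : ∀ w : W, conj (K w (Sum.inl x)) * K w (Sum.inl x)
        = ((if xm w = x then Real.exp (V (Sum.inl (xp w)) - V (Sum.inl x)) * Real.tan (θ w)
            else if xp w = x then Real.exp (V (Sum.inl (xm w)) - V (Sum.inl x)) * Real.tan (θ w)
            else 0 : ℝ) : ℂ) := by
      intro w
      by_cases h1 : xm w = x
      · subst h1
        rw [if_pos rfl]
        simp only [hK, map_mul, Complex.conj_ofReal]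
        have hct : (ctil w (Sum.inl (xm w)) : ℂ) * (ctil w (Sum.inl (xm w)) : ℂ)
            = ((Real.exp (V (Sum.inl (xp w)) - V (Sum.inl (xm w))) * Real.tan (θ w) : ℝ) : ℂ) := by
          rw [← Complex.ofReal_mul, hc2, Real.mul_self_sqrt (mul_nonneg (Real.exp_nonneg _) (le_of_lt (htan w)))]
        calc (ctil w (Sum.inl (xm w)) : ℂ) * conj (ζ w (Sum.inl (xm w)))
              * ((ctil w (Sum.inl (xm w)) : ℂ) * ζ w (Sum.inl (xm w)))
            = ((ctil w (Sum.inl (xm w)) : ℂ) * (ctil w (Sum.inl (xm w)) : ℂ))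
              * (conj (ζ w (Sum.inl (xm w))) * ζ w (Sum.inl (xm w))) := by ring
          _ = _ := by rw [hct, hζsq w, mul_one]
      · rw [if_neg h1]
        by_cases h2 : xp w = x
        · subst h2
          rw [if_pos rfl]
          simp only [hK, map_mul, Complex.conj_ofReal]
          have hct : (ctil w (Sum.inl (xp w)) : ℂ) * (ctil w (Sum.inl (xp w)) : ℂ)
              = ((Real.exp (V (Sum.inl (xm w)) - V (Sum.inl (xp w))) * Real.tan (θ w) : ℝ) : ℂ) := by
            rw [← Complex.ofReal_mul, hc1, Real.mul_self_sqrt (mul_nonneg (Real.exp_nonneg _) (le_of_lt (htan w)))]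
          calc (ctil w (Sum.inl (xp w)) : ℂ) * conj (ζ w (Sum.inl (xp w)))
                * ((ctil w (Sum.inl (xp w)) : ℂ) * ζ w (Sum.inl (xp w)))
              = ((ctil w (Sum.inl (xp w)) : ℂ) * (ctil w (Sum.inl (xp w)) : ℂ))
                * (conj (ζ w (Sum.inl (xp w))) * ζ w (Sum.inl (xp w))) := by ring
            _ = _ := by rw [hct, hζsq' w, mul_one]
        · rw [if_neg h2]
          have h0 : ctil w (Sum.inl x) = 0 :=
            hc0 w _ (by simpa using fun h => h1 h.symm) (by simpa using fun h => h2 h.symm)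
              (by simp) (by simp)
          simp [hK, h0]
    have hreal : m x + ∑ x' : Γ, c0 x x'
        = ∑ w : W, (if xm w = x then Real.exp (V (Sum.inl (xp w)) - V (Sum.inl x)) * Real.tan (θ w)
            else if xp w = x then Real.exp (V (Sum.inl (xm w)) - V (Sum.inl x)) * Real.tan (θ w)
            else 0) := by
      have h1 : m x + ∑ x' : Γ, c0 x x'
          = ∑ x' : Γ, c0 x x' * Real.exp (V (Sum.inl x') - V (Sum.inl x)) := by
        rw [hm, Finset.mul_sum, ← Finset.sum_add_distrib]
        refine Finset.sum_congr rfl fun x' _ => ?_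
        rw [Real.exp_sub]
        have h := Real.exp_ne_zero (V (Sum.inl x))
        rw [Real.exp_neg]
        field_simp
        ring
      rw [h1]
      have h2 : ∀ x' : Γ, c0 x x' * Real.exp (V (Sum.inl x') - V (Sum.inl x))
          = ∑ w : W, (if (xm w = x ∧ xp w = x') ∨ (xm w = x' ∧ xp w = x)
              then Real.tan (θ w) * Real.exp (V (Sum.inl x') - V (Sum.inl x)) else 0) := by
        intro x'
        rw [hc0def, Finset.sum_mul]
        exact Finset.sum_congr rfl fun w _ => by rw [ite_mul, zero_mul]
      rw [Finset.sum_congr rfl fun x' _ => h2 x', Finset.sum_comm]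
      refine Finset.sum_congr rfl fun w _ => ?_
      by_cases h1' : xm w = x
      · rw [if_pos h1']
        have h0 : ∀ x' ∈ Finset.univ, x' ≠ xp w →
            (if (xm w = x ∧ xp w = x') ∨ (xm w = x' ∧ xp w = x)
              then Real.tan (θ w) * Real.exp (V (Sum.inl x') - V (Sum.inl x)) else 0) = 0 := by
          intro x' _ hx'
          rw [if_neg]
          rintro (⟨-, h⟩ | ⟨h, h'⟩)
          · exact hx' h.symm
          · exact hx w (h1'.trans h'.symm)
        rw [Finset.sum_eq_single_of_mem (xp w) (Finset.mem_univ _) h0,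
          if_pos (Or.inl ⟨h1', rfl⟩)]
        ring
      · rw [if_neg h1']
        by_cases h2' : xp w = x
        · rw [if_pos h2']
          have h0 : ∀ x' ∈ Finset.univ, x' ≠ xm w →
              (if (xm w = x ∧ xp w = x') ∨ (xm w = x' ∧ xp w = x)
                then Real.tan (θ w) * Real.exp (V (Sum.inl x') - V (Sum.inl x)) else 0) = 0 := by
            intro x' _ hx'
            rw [if_neg]
            rintro (⟨h, -⟩ | ⟨h, -⟩)
            · exact h1' h
            · exact hx' h.symm
          rw [Finset.sum_eq_single_of_mem (xm w) (Finset.mem_univ _) h0,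
            if_pos (Or.inr ⟨rfl, h2'⟩)]
          ring
        · rw [if_neg h2']
          refine Finset.sum_eq_zero fun x' _ => ?_
          rw [if_neg]
          rintro (⟨h, -⟩ | ⟨-, h⟩)
          exacts [h1' h, h2' h]
    simp only [KstarK]
    rw [Finset.sum_congr rfl fun w _ => hterm w, hreal, Complex.ofReal_sum]
  exact ⟨fun x y => ⟨part1 x y, part1b x y⟩, part2, part3⟩
end

section
/- For any complex numbers S and any rhombus with center x₀ of an isoradial graph, the averaging identity (1/(4μ_B(x₀)))·Σ_{w₀∼x₀} μ_W(w₀)·Proj[S; conj(w₀−x₀)] = S/2 holds, where Proj[z;ζ] = Re(z·conj(ζ)/|ζ|)·ζ/|ζ| is the orthogonal projection onto the line ζℝ. -/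
open Complex ComplexConjugate

/-- Orthogonal projection of `z` onto the line `ζℝ`:
`Proj[z;ζ] = Re(z·conj ζ/|ζ|)·ζ/|ζ|`. -/
noncomputable def Proj (z ζ : ℂ) : ℂ :=
  (((z * conj ζ / ((‖ζ‖ : ℝ) : ℂ)).re : ℝ) : ℂ) * ζ / ((‖ζ‖ : ℝ) : ℂ)

lemma proj_eq (S ζ : ℂ) (hζ : ζ ≠ 0) :
    Proj S ζ = S / 2 + conj S * ζ ^ 2 / (2 * (((‖ζ‖ : ℝ) : ℂ)) ^ 2) := by
  have habs : ((‖ζ‖ : ℝ) : ℂ) ≠ 0 := by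
    simpa using (norm_ne_zero_iff.mpr hζ)
  have hre : ∀ z : ℂ, ((z.re : ℝ) : ℂ) = (z + conj z) / 2 := by
    intro z
    have := Complex.add_conj z
    rw [this]; push_cast; ring
  rw [Proj, hre]
  have hconj : conj (S * conj ζ / ((‖ζ‖ : ℝ) : ℂ)) = conj S * ζ / ((‖ζ‖ : ℝ) : ℂ) := by
    simp [map_div₀, Complex.conj_ofReal]
  rw [hconj]
  have hmc : ζ * conj ζ = (((‖ζ‖ : ℝ) : ℂ)) ^ 2 := by
    rw [Complex.mul_conj]; norm_cast; rw [Complex.sq_norm]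
  field_simp
  linear_combination S * hmc

lemma key_tel (t p : ℝ) :
    ((Real.sin (2 * t) : ℝ) : ℂ) * Complex.exp (-(2 * Complex.I * (((p : ℂ) + (t : ℂ)))))
      = (Complex.exp (-(2 * Complex.I * (p : ℂ)))
          - Complex.exp (-(2 * Complex.I * ((p : ℂ) + 2 * (t : ℂ))))) * (-Complex.I) / 2 := by
  have e1 : Complex.exp (((2 * t : ℝ) : ℂ) * Complex.I)
      * Complex.exp (-(2 * Complex.I * (((p : ℂ) + (t : ℂ)))))
      = Complex.exp (-(2 * Complex.I * (p : ℂ))) := by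
    rw [← Complex.exp_add]; congr 1; push_cast; ring
  have e2 : Complex.exp (-((2 * t : ℝ) : ℂ) * Complex.I)
      * Complex.exp (-(2 * Complex.I * (((p : ℂ) + (t : ℂ)))))
      = Complex.exp (-(2 * Complex.I * ((p : ℂ) + 2 * (t : ℂ)))) := by
    rw [← Complex.exp_add]; congr 1; push_cast; ring
  rw [Complex.ofReal_sin, Complex.sin]
  set F := Complex.exp (-(2 * Complex.I * (((p : ℂ) + (t : ℂ)))))
  set G := Complex.exp (-(2 * Complex.I * (p : ℂ)))
  set H := Complex.exp (-(2 * Complex.I * ((p : ℂ) + 2 * (t : ℂ))))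
  have isq := Complex.I_sq
  linear_combination (Complex.I / 2) * e2 - (Complex.I / 2) * e1
    + ((G - H) * (-Complex.I) / 2) * isq + (Complex.I * (G - H) / 2) * isq

noncomputable def gfun (n : ℕ) (θ : Fin n → ℝ) (m : ℕ) : ℂ :=
  Complex.exp (-(2 * Complex.I *
    (((∑ j : Fin n, if (j : ℕ) < m then 2 * θ j else 0 : ℝ)) : ℂ)))

lemma sum_split (n : ℕ) (θ : Fin n → ℝ) (k : Fin n) :
    (∑ j : Fin n, if (j : ℕ) < (k : ℕ) + 1 then 2 * θ j else 0)
      = (∑ j : Fin n, if (j : ℕ) < (k : ℕ) then 2 * θ j else 0) + 2 * θ k := by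
  have h : ∀ j : Fin n, (if (j : ℕ) < (k : ℕ) + 1 then 2 * θ j else 0)
      = (if (j : ℕ) < (k : ℕ) then 2 * θ j else 0) + (if j = k then 2 * θ j else 0) := by
    intro j
    rcases lt_trichotomy (j : ℕ) (k : ℕ) with h | h | h
    · have hjk : j ≠ k := Fin.ne_of_val_ne (Nat.ne_of_lt h)
      simp [h, Nat.lt_succ_of_lt h, hjk]
    · have hjk : j = k := Fin.ext h
      simp [hjk]
    · have h1 : ¬ (j : ℕ) < (k : ℕ) + 1 := by omega
      have h2 : ¬ (j : ℕ) < (k : ℕ) := by omega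
      have hjk : j ≠ k := Fin.ne_of_val_ne (Nat.ne_of_gt h)
      simp [h1, h2, hjk]
  rw [Finset.sum_congr rfl (fun j _ => h j), Finset.sum_add_distrib,
    Finset.sum_ite_eq' Finset.univ k (fun j => 2 * θ j)]
  simp

/-- The averaging identity
`(1/(4μ_B(x₀)))·∑_{w₀∼x₀} μ_W(w₀)·Proj[S; conj(w₀−x₀)] = S/2` for any complex `S`,
where `x₀` is a black vertex of an isoradial graph with surrounding rhombi of half-angles
`θ k` (summing to `2π`) whose centers `w k` satisfy
`w k − x₀ = ε cos(θ k)·e^{i(φ k + θ k)}` with `φ k` the cumulative angles, and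
`μ_W(w k) = ε² sin(2θ k)`, `μ_B(x₀) = (1/4)∑ μ_W`. -/
theorem stmt12 (n : ℕ) (hn : 0 < n) (ε : ℝ) (hε : 0 < ε)
    (θ : Fin n → ℝ) (hθ : ∀ k, 0 < θ k ∧ θ k < Real.pi / 2)
    (hsum : ∑ k : Fin n, 2 * θ k = 2 * Real.pi)
    (x₀ : ℂ) (w : Fin n → ℂ) (φ : Fin n → ℝ)
    (hφ : ∀ k, φ k = ∑ j : Fin n, if (j : ℕ) < (k : ℕ) then 2 * θ j else 0)
    (hw : ∀ k, w k - x₀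
      = ((ε * Real.cos (θ k) : ℝ) : ℂ) * Complex.exp (Complex.I * ((φ k + θ k : ℝ) : ℂ))) :
    ∀ S : ℂ,
      (1 / (4 * ((((1 : ℝ) / 4) * ∑ k : Fin n, ε ^ 2 * Real.sin (2 * θ k) : ℝ) : ℂ))) *
        ∑ k : Fin n, ((ε ^ 2 * Real.sin (2 * θ k) : ℝ) : ℂ) * Proj S (conj (w k - x₀))
      = S / 2 := by
  intro S
  have hM : 0 < ∑ k : Fin n, ε ^ 2 * Real.sin (2 * θ k) := by
    apply Finset.sum_pos
    · intro k _
      have h1 := (hθ k).1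
      have h2 := (hθ k).2
      have : 0 < Real.sin (2 * θ k) :=
        Real.sin_pos_of_pos_of_lt_pi (by linarith) (by linarith)
      positivity
    · exact Finset.univ_nonempty_iff.mpr (Fin.pos_iff_nonempty.mp hn)
  have hg0 : gfun n θ 0 = 1 := by simp [gfun]
  have hgn : gfun n θ n = 1 := by
    rw [gfun]
    have hall : (∑ j : Fin n, if (j : ℕ) < n then 2 * θ j else 0) = 2 * Real.pi := by
      rw [← hsum]
      exact Finset.sum_congr rfl fun j _ => by simp [j.isLt]
    rw [hall]
    have : (-(2 * Complex.I * ((2 * Real.pi : ℝ) : ℂ)))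
        = ((-2 : ℤ) : ℂ) * (2 * (Real.pi : ℂ) * Complex.I) := by push_cast; ring
    rw [this, Complex.exp_int_mul_two_pi_mul_I]
  set C : ℂ := conj S * ((ε : ℝ) : ℂ) ^ 2 * (-Complex.I) / 4 with hC
  have hterm : ∀ k : Fin n,
      ((ε ^ 2 * Real.sin (2 * θ k) : ℝ) : ℂ) * Proj S (conj (w k - x₀))
        = ((ε ^ 2 * Real.sin (2 * θ k) : ℝ) : ℂ) * (S / 2)
          + C * (gfun n θ (k : ℕ) - gfun n θ ((k : ℕ) + 1)) := by
    intro k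
    have hcos : 0 < Real.cos (θ k) :=
      Real.cos_pos_of_mem_Ioo ⟨by linarith [Real.pi_pos, (hθ k).1], (hθ k).2⟩
    have hr : 0 < ε * Real.cos (θ k) := mul_pos hε hcos
    have hζ : conj (w k - x₀) = ((ε * Real.cos (θ k) : ℝ) : ℂ)
        * Complex.exp (-(Complex.I * ((φ k + θ k : ℝ) : ℂ))) := by
      rw [hw k, map_mul, Complex.conj_ofReal, ← Complex.exp_conj]
      congr 1
      simp [map_mul, Complex.conj_I, Complex.conj_ofReal]
    have hre0 : (-(Complex.I * ((φ k + θ k : ℝ) : ℂ))).re = 0 := by simp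
    have habs : ‖conj (w k - x₀)‖ = ε * Real.cos (θ k) := by
      rw [hζ, norm_mul, Complex.norm_real, Real.norm_eq_abs, Complex.norm_exp, hre0, Real.exp_zero,
        mul_one, abs_of_pos hr]
    have hne : conj (w k - x₀) ≠ 0 := by
      intro h
      rw [h, norm_zero] at habs
      exact (ne_of_gt hr) habs.symm
    rw [proj_eq S _ hne, habs, hζ]
    have hE2 : (Complex.exp (-(Complex.I * ((φ k + θ k : ℝ) : ℂ)))) ^ 2
        = Complex.exp (-(2 * Complex.I * (((φ k : ℝ) : ℂ) + ((θ k : ℝ) : ℂ)))) := by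
      rw [sq, ← Complex.exp_add]; congr 1; push_cast; ring
    have hgk : gfun n θ (k : ℕ) = Complex.exp (-(2 * Complex.I * ((φ k : ℝ) : ℂ))) := by
      rw [gfun, ← hφ k]
    have hgk1 : gfun n θ ((k : ℕ) + 1)
        = Complex.exp (-(2 * Complex.I * (((φ k : ℝ) : ℂ) + 2 * ((θ k : ℝ) : ℂ)))) := by
      rw [gfun, sum_split n θ k, ← hφ k]
      congr 1
      push_cast
      ring
    rw [hgk, hgk1, hC]
    have hkey := key_tel (θ k) (φ k)
    have hrC : ((ε * Real.cos (θ k) : ℝ) : ℂ) ≠ 0 := by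
      exact_mod_cast ne_of_gt hr
    have hcancel : (((ε * Real.cos (θ k) : ℝ) : ℂ)
          * Complex.exp (-(Complex.I * ((φ k + θ k : ℝ) : ℂ)))) ^ 2
          / (2 * ((ε * Real.cos (θ k) : ℝ) : ℂ) ^ 2)
        = Complex.exp (-(2 * Complex.I * (((φ k : ℝ) : ℂ) + ((θ k : ℝ) : ℂ)))) / 2 := by
      have hx : ((ε * Real.cos (θ k) : ℝ) : ℂ) ^ 2 ≠ 0 := pow_ne_zero 2 hrC
      rw [mul_pow, hE2, mul_comm (2 : ℂ) (((ε * Real.cos (θ k) : ℝ) : ℂ) ^ 2)]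
      exact mul_div_mul_left _ _ hx
    rw [mul_div_assoc (conj S), hcancel]
    push_cast at hkey ⊢
    linear_combination (conj S * ((ε : ℝ) : ℂ) ^ 2 / 2) * hkey
  rw [Finset.sum_congr rfl (fun k _ => hterm k), Finset.sum_add_distrib,
    ← Finset.sum_mul]
  have htel : ∑ k : Fin n, (gfun n θ (k : ℕ) - gfun n θ ((k : ℕ) + 1))
      = gfun n θ 0 - gfun n θ n := by
    rw [Fin.sum_univ_eq_sum_range (fun i => gfun n θ i - gfun n θ (i + 1))]
    exact Finset.sum_range_sub' _ n
  have h2 : ∑ x : Fin n, C * (gfun n θ (x : ℕ) - gfun n θ ((x : ℕ) + 1)) = 0 := by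
    rw [← Finset.mul_sum, htel, hg0, hgn, sub_self, mul_zero]
  rw [h2, add_zero]
  have hMC : ((∑ k : Fin n, ε ^ 2 * Real.sin (2 * θ k) : ℝ) : ℂ) ≠ 0 := by
    exact_mod_cast ne_of_gt hM
  have hcast : (∑ k : Fin n, ((ε ^ 2 * Real.sin (2 * θ k) : ℝ) : ℂ))
      = ((∑ k : Fin n, ε ^ 2 * Real.sin (2 * θ k) : ℝ) : ℂ) :=
    (Complex.ofReal_sum _ _).symm
  have h14 : (((1 : ℝ) / 4 * ∑ k : Fin n, ε ^ 2 * Real.sin (2 * θ k) : ℝ) : ℂ)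
      = ((∑ k : Fin n, ε ^ 2 * Real.sin (2 * θ k) : ℝ) : ℂ) / 4 := by
    rw [Complex.ofReal_mul]; push_cast; ring
  rw [hcast, h14]
  have h4 : (4 : ℂ) * (((∑ k : Fin n, ε ^ 2 * Real.sin (2 * θ k) : ℝ) : ℂ) / 4)
      = ((∑ k : Fin n, ε ^ 2 * Real.sin (2 * θ k) : ℝ) : ℂ) := by ring
  rw [h4, one_div, ← mul_assoc, inv_mul_cancel₀ hMC, one_mul]
end

section
/- Two-variable modulus-of-continuity gluing lemma: let C₁ ⊆ ℝ² be compact, φ, ψ : ℝ≥0 → ℝ≥0 continuous increasing with φ(0) = ψ(0) = 0, C₁ > 0 a constant, and f : C₁ → ℝ satisfying |f| ≤ C₁ on C₁, |f(x₁,x₂) − f(x₁',x₂)| ≤ C₁·φ(|x₁−x₁'|) whenever both points lie in C₁, and |f(x₁,x₂) − f(x₁,x₂')| ≤ C₁·ψ(|x₂−x₂'|) whenever both points lie in C₁. Then for every compact C₂ contained in the interior of C₁ there exists C₂' > 0 such that |f(x₁,x₂) − f(x₁',x₂')| ≤ C₂'·(φ(|x₁−x₁'|) + ψ(|x₂−x₂'|))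 for all (x₁,x₂), (x₁',x₂') ∈ C₂. -/
/-- Two-variable modulus-of-continuity gluing lemma: if `f` is bounded by `C` on a compact
`K ⊆ ℝ²`, has modulus of continuity `C·φ` in the first variable and `C·ψ` in the second
(with `φ, ψ` continuous increasing and vanishing at `0`), then on every compact
`K₂ ⊆ int K` there exists `C₂ > 0` with
`|f(x₁,x₂) − f(x₁',x₂')| ≤ C₂·(φ(|x₁−x₁'|) + ψ(|x₂−x₂'|))`. -/
theorem stmt19 (K : Set (ℝ × ℝ)) (hK : IsCompact K)
    (φ ψ : ℝ → ℝ)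
    (hφc : ContinuousOn φ (Set.Ici 0)) (hφm : StrictMonoOn φ (Set.Ici 0)) (hφ0 : φ 0 = 0)
    (hψc : ContinuousOn ψ (Set.Ici 0)) (hψm : StrictMonoOn ψ (Set.Ici 0)) (hψ0 : ψ 0 = 0)
    (C : ℝ) (hC : 0 < C) (f : ℝ × ℝ → ℝ)
    (hbd : ∀ p ∈ K, |f p| ≤ C)
    (h1 : ∀ x₁ x₁' x₂, (x₁, x₂) ∈ K → (x₁', x₂) ∈ K →
      |f (x₁, x₂) - f (x₁', x₂)| ≤ C * φ |x₁ - x₁'|)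
    (h2 : ∀ x₁ x₂ x₂', (x₁, x₂) ∈ K → (x₁, x₂') ∈ K →
      |f (x₁, x₂) - f (x₁, x₂')| ≤ C * ψ |x₂ - x₂'|) :
    ∀ K₂ : Set (ℝ × ℝ), IsCompact K₂ → K₂ ⊆ interior K →
      ∃ C₂ > 0, ∀ p ∈ K₂, ∀ q ∈ K₂,
        |f p - f q| ≤ C₂ * (φ |p.1 - q.1| + ψ |p.2 - q.2|) := by
  intro K₂ hK₂ hsub
  obtain ⟨d, hd, hth⟩ := hK₂.exists_thickening_subset_open isOpen_interior hsub
  have hφd : 0 < φ d := by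
    have := hφm Set.self_mem_Ici (Set.mem_Ici.2 hd.le) hd
    simpa [hφ0] using this
  have hφnn : ∀ t : ℝ, 0 ≤ φ |t| := fun t => by
    rcases eq_or_lt_of_le (abs_nonneg t) with h | h
    · simp [← h, hφ0]
    · exact le_of_lt (by simpa [hφ0] using hφm Set.self_mem_Ici (le_of_lt h) h)
  have hψnn : ∀ t : ℝ, 0 ≤ ψ |t| := fun t => by
    rcases eq_or_lt_of_le (abs_nonneg t) with h | h
    · simp [← h, hψ0]
    · exact le_of_lt (by simpa [hψ0] using hψm Set.self_mem_Ici (le_of_lt h) h)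
  refine ⟨C + 2 * C / φ d, by positivity, ?_⟩
  rintro ⟨x₁, x₂⟩ hp ⟨y₁, y₂⟩ hq
  have hpK : (x₁, x₂) ∈ K := interior_subset (hsub hp)
  have hqK : (y₁, y₂) ∈ K := interior_subset (hsub hq)
  simp only
  by_cases hcase : |x₁ - y₁| < d
  · have hmid : (y₁, x₂) ∈ K := by
      apply interior_subset (hth ?_)
      rw [Metric.mem_thickening_iff]
      refine ⟨(x₁, x₂), hp, ?_⟩
      rw [Prod.dist_eq]
      simpa [Real.dist_eq, abs_sub_comm] using hcase
    have key : |f (x₁, x₂) - f (y₁, y₂)| ≤ C * φ |x₁ - y₁| + C * ψ |x₂ - y₂| := by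
      calc |f (x₁, x₂) - f (y₁, y₂)|
          ≤ |f (x₁, x₂) - f (y₁, x₂)| + |f (y₁, x₂) - f (y₁, y₂)| := abs_sub_le _ _ _
        _ ≤ C * φ |x₁ - y₁| + C * ψ |x₂ - y₂| :=
            add_le_add (h1 x₁ y₁ x₂ hpK hmid) (h2 y₁ x₂ y₂ hmid hqK)
    refine key.trans ?_
    have h2d : (0:ℝ) ≤ 2 * C / φ d := by positivity
    nlinarith [hφnn (x₁ - y₁), hψnn (x₂ - y₂)]
  · have hbig : φ d ≤ φ |x₁ - y₁| :=
      hφm.monotoneOn (Set.mem_Ici.2 hd.le) (Set.mem_Ici.2 (abs_nonneg _)) (not_lt.1 hcase)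
    have h2C : |f (x₁, x₂) - f (y₁, y₂)| ≤ 2 * C := by
      have := abs_sub_abs_le_abs_sub (f (x₁, x₂)) (f (y₁, y₂))
      have hb1 := hbd _ hpK
      have hb2 := hbd _ hqK
      have := abs_sub (f (x₁, x₂)) (f (y₁, y₂))
      calc |f (x₁, x₂) - f (y₁, y₂)| ≤ |f (x₁, x₂)| + |f (y₁, y₂)| := abs_sub _ _
        _ ≤ 2 * C := by linarith
    refine h2C.trans ?_
    have hfd : 2 * C / φ d * φ d = 2 * C := div_mul_cancel₀ _ hφd.ne'
    have hnn : (0:ℝ) ≤ 2 * C / φ d := by positivity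
    nlinarith [hφnn (x₁ - y₁), hψnn (x₂ - y₂),
      mul_le_mul_of_nonneg_left hbig hnn]
end
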